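/- arXiv:1605.02012 — 3 statements merged into one kernel-verified Lean document; each statement's English description precedes it below -/
import Mathlib

section
/- Let M ≥ 2, D = (M+2)(M-1)/2, and let φ_1, ..., φ_N be unit vectors in ℝ^M forming a tight frame, i.e., ∑_{j=1}^N φ_j φ_j^T = (N/M)·I_M. Then there exist unit vectors y_1, ..., y_N in ℝ^D such that ⟨φ_j, φ_l⟩^2 = 1/M + ((M-1)/M)·⟨y_j, y_l⟩ for all j, l ∈ {1, ..., N}, and additionally ∑_{j=1}^N y_j = 0. -/
/-!
For a unit vector `φ ∈ ℝ^M` put `ψ(φ) = √(M/(M-1)) (φ φᵀ - I/M)`. This is a traceless symmetric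
matrix, and since `⟨φφᵀ, φ'φ'ᵀ⟩ = ⟨φ, φ'⟩²`, `⟨φφᵀ, I⟩ = 1` and `⟨I, I⟩ = M` in the
Hilbert–Schmidt inner product, `⟨ψ(φ), ψ(φ')⟩ = (M/(M-1)) (⟨φ, φ'⟩² - 1/M)`; in particular `ψ(φ)`
is a unit vector. Tightness `∑ φ_j φ_jᵀ = (N/M) I` says exactly that `∑ ψ(φ_j) = 0`. Finally the
traceless symmetric matrices have dimension `(M+2)(M-1)/2`, so they embed isometrically in `ℝ^D`.
-/

open Finset

theorem exists_linearIsometry_euclideanSpace_of_finrank_le {𝕜 V : Type*} [RCLike 𝕜]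
    [NormedAddCommGroup V] [InnerProductSpace 𝕜 V] [FiniteDimensional 𝕜 V] {D : ℕ}
    (h : Module.finrank 𝕜 V ≤ D) : Nonempty (V →ₗᵢ[𝕜] EuclideanSpace 𝕜 (Fin D)) := by
  let b := (stdOrthonormalBasis 𝕜 V).toBasis
  let e : Fin (Module.finrank 𝕜 V) → EuclideanSpace 𝕜 (Fin D) :=
    fun i => EuclideanSpace.single (Fin.castLE h i) 1
  have he : Orthonormal 𝕜 (b.constr 𝕜 e ∘ b) := by
    simpa [Function.comp_def, b.constr_basis, e] using
      EuclideanSpace.orthonormal_single.comp _ (Fin.castLE_injective h)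
  exact ⟨(b.constr 𝕜 e).isometryOfOrthonormal (stdOrthonormalBasis 𝕜 V).orthonormal he⟩

theorem choose_succ_two_sub_one (M : ℕ) : (M + 1).choose 2 - 1 = (M + 2) * (M - 1) / 2 := by
  rw [Nat.choose_two_right]
  rcases M with _ | k
  · rfl
  · have : (k + 1 + 1) * (k + 1 + 1 - 1) = (k + 1 + 2) * (k + 1 - 1) + 2 * 1 := by
      simp only [Nat.add_sub_cancel]; ring
    rw [this, Nat.add_mul_div_left _ _ two_pos, Nat.add_sub_cancel]

variable {ι : Type*} [Fintype ι]

-- Matrices are modelled as `EuclideanSpace ℝ (ι × ι)`, whose inner product is Hilbert–Schmidt.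
def outerSelf (x : EuclideanSpace ℝ ι) : EuclideanSpace ℝ (ι × ι) :=
  WithLp.toLp 2 fun p => x p.1 * x p.2

theorem inner_outerSelf_outerSelf (x z : EuclideanSpace ℝ ι) :
    inner ℝ (outerSelf x) (outerSelf z) = inner ℝ x z ^ 2 := by
  simp only [outerSelf, PiLp.inner_apply, Fintype.sum_prod_type, sq, Finset.sum_mul_sum,
    RCLike.inner_apply, conj_trivial]
  exact Finset.sum_congr rfl fun _ _ => Finset.sum_congr rfl fun _ _ => by ring

theorem nonempty_of_norm_eq_one {x : EuclideanSpace ℝ ι} (hx : ‖x‖ = 1) : Nonempty ι := by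
  by_contra h
  rw [not_nonempty_iff] at h
  simp [Subsingleton.elim x 0] at hx

variable [DecidableEq ι]

variable (ι) in
def idMat : EuclideanSpace ℝ (ι × ι) :=
  WithLp.toLp 2 fun p => if p.1 = p.2 then 1 else 0

theorem inner_idMat_left (A : EuclideanSpace ℝ (ι × ι)) :
    inner ℝ (idMat ι) A = ∑ i, A (i, i) := by
  simp [idMat, PiLp.inner_apply, Fintype.sum_prod_type]

theorem inner_outerSelf_idMat (x : EuclideanSpace ℝ ι) :
    inner ℝ (outerSelf x) (idMat ι) = ‖x‖ ^ 2 := by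
  rw [real_inner_comm, inner_idMat_left, ← real_inner_self_eq_norm_sq, PiLp.inner_apply]
  simp [outerSelf, sq]

theorem inner_idMat_idMat : inner ℝ (idMat ι) (idMat ι) = Fintype.card ι := by
  rw [inner_idMat_left]
  simp [idMat]

variable (ι) in
def symTraceless : Submodule ℝ (EuclideanSpace ℝ (ι × ι)) where
  carrier := {A | (∀ i j, A (i, j) = A (j, i)) ∧ ∑ i, A (i, i) = 0}
  add_mem' := by
    rintro A B ⟨hA, trA⟩ ⟨hB, trB⟩
    exact ⟨fun i j => by simp [hA i j, hB i j], by simp [sum_add_distrib, trA, trB]⟩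
  zero_mem' := by simp
  smul_mem' := by
    rintro c A ⟨hA, trA⟩
    exact ⟨fun i j => by simp [hA i j], by simp [← mul_sum, trA]⟩

theorem finrank_symTraceless_le [Nonempty ι] :
    Module.finrank ℝ (symTraceless ι) ≤ (Fintype.card ι + 1).choose 2 - 1 := by
  obtain ⟨i₀⟩ := ‹Nonempty ι›
  let coords : symTraceless ι →ₗ[ℝ] ({s : Sym2 ι // s ≠ s(i₀, i₀)} → ℝ) :=
    LinearMap.pi fun s => (EuclideanSpace.proj s.1.out).toLinearMap ∘ₗ (symTraceless ι).subtype
  -- A symmetric matrix is determined by its entries on unordered pairs, and for a traceless one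
  -- the entry at `s(i₀, i₀)` is determined by the other diagonal entries.
  have hcoords : Function.Injective coords := by
    rw [injective_iff_map_eq_zero]
    rintro ⟨A, hsym, htr⟩ hA
    have hout : ∀ a b, A (s(a, b).out) = A (a, b) := fun a b => by
      have : s((s(a, b).out).1, (s(a, b).out).2) = s(a, b) := Quot.out_eq _
      rcases (Sym2.mk_eq_mk_iff (q := (a, b))).1 this with h | h <;> simp [h, hsym b a]
    have hoff : ∀ a b, s(a, b) ≠ s(i₀, i₀) → A (a, b) = 0 := fun a b h => by
      simpa [hout, coords] using congrFun hA ⟨_, h⟩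
    have hdiag : A (i₀, i₀) = 0 := by
      rwa [sum_eq_single i₀ (fun i _ hi => hoff i i (by simpa using hi)) (by simp)] at htr
    ext ⟨a, b⟩
    by_cases h : s(a, b) = s(i₀, i₀)
    · obtain ⟨rfl, rfl⟩ : a = i₀ ∧ b = i₀ := by simpa using h
      exact hdiag
    · exact hoff a b h
  calc Module.finrank ℝ (symTraceless ι)
      ≤ Module.finrank ℝ ({s : Sym2 ι // s ≠ s(i₀, i₀)} → ℝ) :=
        LinearMap.finrank_le_finrank_of_injective hcoords
    _ = (Fintype.card ι + 1).choose 2 - 1 := by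
        rw [Module.finrank_fintype_fun_eq_card, Fintype.card_subtype_compl,
          Fintype.card_subtype_eq, Sym2.card]

noncomputable def tracelessPart (x : EuclideanSpace ℝ ι) : EuclideanSpace ℝ (ι × ι) :=
  outerSelf x - (Fintype.card ι : ℝ)⁻¹ • idMat ι

theorem tracelessPart_mem {x : EuclideanSpace ℝ ι} (hx : ‖x‖ = 1) :
    tracelessPart x ∈ symTraceless ι := by
  have := nonempty_of_norm_eq_one hx
  refine ⟨fun i j => by simp [tracelessPart, outerSelf, idMat, mul_comm, eq_comm], ?_⟩
  rw [← inner_idMat_left, tracelessPart, inner_sub_right, inner_smul_right, real_inner_comm,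
    inner_outerSelf_idMat, inner_idMat_idMat, hx, inv_mul_cancel₀ (by positivity)]
  norm_num

theorem inner_tracelessPart {x z : EuclideanSpace ℝ ι} (hx : ‖x‖ = 1) (hz : ‖z‖ = 1) :
    inner ℝ (tracelessPart x) (tracelessPart z) = inner ℝ x z ^ 2 - (Fintype.card ι : ℝ)⁻¹ := by
  have := nonempty_of_norm_eq_one hx
  have hcard : (Fintype.card ι : ℝ) ≠ 0 := by positivity
  have hzI : inner ℝ (idMat ι) (outerSelf z) = ‖z‖ ^ 2 := by
    rw [real_inner_comm, inner_outerSelf_idMat]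
  simp only [tracelessPart, inner_sub_left, inner_sub_right, inner_smul_left, inner_smul_right,
    inner_outerSelf_outerSelf, inner_outerSelf_idMat, hzI, inner_idMat_idMat, hx, hz,
    RCLike.conj_to_real]
  field_simp
  ring

theorem sum_outerSelf_eq_smul_idMat {κ : Type*} [Fintype κ] (φ : κ → EuclideanSpace ℝ ι)
    (A : ℝ) (h : ∀ x, ∑ j, inner ℝ (φ j) x • φ j = A • x) :
    ∑ j, outerSelf (φ j) = A • idMat ι := by
  ext ⟨a, b⟩
  have := congrArg (· a) (h (EuclideanSpace.single b 1))
  simp [EuclideanSpace.inner_single_right, WithLp.ofLp_sum] at this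
  simp [outerSelf, idMat, WithLp.ofLp_sum, ← this, mul_comm]

theorem sum_tracelessPart_eq_zero {κ : Type*} [Fintype κ] (φ : κ → EuclideanSpace ℝ ι)
    (h : ∀ x, ∑ j, inner ℝ (φ j) x • φ j = ((Fintype.card κ : ℝ) / Fintype.card ι) • x) :
    ∑ j, tracelessPart (φ j) = 0 := by
  simp only [tracelessPart, sum_sub_distrib, sum_outerSelf_eq_smul_idMat φ _ h, sum_const,
    card_univ, ← Nat.cast_smul_eq_nsmul ℝ, smul_smul, div_eq_mul_inv, sub_self]

/-- (Zero-summing spherical embedding, real case.)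
For `M ≥ 2`, `D = (M+2)(M-1)/2`, and unit vectors `φ_1, ..., φ_N` in `ℝ^M` forming a
tight frame (`∑ j, φ_j φ_jᵀ = (N/M) • I`), there exist unit vectors `y_1, ..., y_N` in
`ℝ^D` with `⟨φ_j, φ_l⟩² = 1/M + ((M-1)/M) ⟨y_j, y_l⟩` for all `j, l`, and `∑ j, y_j = 0`. -/
theorem spherical_embedding_tight_real {M N : ℕ} (hM : 2 ≤ M)
    (φ : Fin N → EuclideanSpace ℝ (Fin M))
    (hunit : ∀ j, ‖φ j‖ = 1)
    (htight : ∀ x : EuclideanSpace ℝ (Fin M),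
      ∑ j, (inner ℝ (φ j) x : ℝ) • φ j = ((N : ℝ) / M) • x) :
    ∃ y : Fin N → EuclideanSpace ℝ (Fin ((M + 2) * (M - 1) / 2)),
      (∀ j, ‖y j‖ = 1) ∧
      (∀ j l, (inner ℝ (φ j) (φ l) : ℝ) ^ 2
        = 1 / (M : ℝ) + ((M : ℝ) - 1) / M * (inner ℝ (y j) (y l) : ℝ)) ∧
      ∑ j, y j = 0 := by
  have hM1 : (0 : ℝ) < M - 1 := by
    have : (2 : ℝ) ≤ M := by exact_mod_cast hM
    linarith
  have : Nonempty (Fin M) := Fin.pos_iff_nonempty.1 (by omega)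
  obtain ⟨L⟩ := exists_linearIsometry_euclideanSpace_of_finrank_le (𝕜 := ℝ)
    ((finrank_symTraceless_le (ι := Fin M)).trans_eq
      (by rw [Fintype.card_fin, choose_succ_two_sub_one]))
  let ψ : Fin N → symTraceless (Fin M) :=
    fun j => ⟨tracelessPart (φ j), tracelessPart_mem (hunit j)⟩
  let y j := √(M / (M - 1)) • L (ψ j)
  have hy : ∀ j l, inner ℝ (y j) (y l) = M / (M - 1) * (inner ℝ (φ j) (φ l) ^ 2 - (M : ℝ)⁻¹) := by
    intro j l
    rw [real_inner_smul_left, real_inner_smul_right, L.inner_map_map, Submodule.coe_inner,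
      inner_tracelessPart (hunit j) (hunit l), Fintype.card_fin, ← mul_assoc,
      Real.mul_self_sqrt (by positivity)]
  refine ⟨y, fun j => ?_, fun j l => ?_, ?_⟩
  · have := hy j j
    rw [real_inner_self_eq_norm_sq, real_inner_self_eq_norm_sq, hunit j] at this
    rw [← pow_eq_one_iff_of_nonneg (norm_nonneg _) two_ne_zero, this]
    field_simp
  · rw [hy]
    field_simp
    ring
  · have hψ : ∑ j, ψ j = 0 :=
      Subtype.ext (by simpa using sum_tracelessPart_eq_zero φ (by simpa using htight))
    simp only [y, ← smul_sum, ← map_sum, hψ, map_zero, smul_zero]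
end

section
/- (Orthoplex bound, real case) Let φ_1, ..., φ_N be unit vectors in ℝ^M with N > M(M+1)/2. Then the coherence satisfies max_{j ≠ l} |⟨φ_j, φ_l⟩| ≥ 1/√M. -/
/-!
Suppose every pair satisfies `⟨φ_j, φ_l⟩² < 1/M`. The traceless rank-one matrices
`T_j = φ_j φ_jᵀ - I/M` then have Frobenius inner products `⟨T_j, T_l⟩ = ⟨φ_j, φ_l⟩² - 1/M < 0`,
so they form a pairwise obtuse family in the space of traceless symmetric matrices, of
dimension `M(M+1)/2 - 1`. A pairwise obtuse family in dimension `d` has at most `d + 1`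
members, hence `N ≤ M(M+1)/2`.
-/

open scoped RealInnerProductSpace
open Module

section PairwiseObtuse

variable {E : Type*} [NormedAddCommGroup E] [InnerProductSpace ℝ E]

/-- The remaining vectors lie in the open half-space `⟪·, v i₀⟫ < 0`. -/
theorem linearIndependent_of_pairwise_inner_neg {ι : Type*} {v : ι → E}
    (hv : Pairwise fun i j => ⟪v i, v j⟫ < 0) (i₀ : ι) :
    LinearIndependent ℝ fun j : {j // j ≠ i₀} => v j := by
  refine LinearMap.BilinForm.linearIndependent_of_pairwise_le_zero (innerₗ E) ?_
    (-innerₗ E (v i₀)) _ (fun j => ?_) (fun j k hjk => ?_)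
  · intro x hx
    simpa using real_inner_self_pos.2 hx
  · simpa using hv (Ne.symm j.2)
  · simpa using (hv (Subtype.coe_injective.ne hjk)).le

theorem card_le_finrank_add_one_of_pairwise_inner_neg [FiniteDimensional ℝ E] {ι : Type*}
    [Fintype ι] {v : ι → E} (hv : Pairwise fun i j => ⟪v i, v j⟫ < 0) :
    Fintype.card ι ≤ finrank ℝ E + 1 := by
  cases isEmpty_or_nonempty ι with
  | inl _ => simp
  | inr h =>
    obtain ⟨i₀⟩ := h
    classical
    have := (linearIndependent_of_pairwise_inner_neg hv i₀).fintype_card_le_finrank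
    rw [Fintype.card_subtype_compl, Fintype.card_subtype_eq] at this
    omega

end PairwiseObtuse

section TracelessSymmetric

variable (ι : Type*) [Fintype ι]

/-- Functions on `Sym2 ι` parametrize the symmetric `ι × ι` matrices. -/
noncomputable def sym2ToMatrixVec : (Sym2 ι → ℝ) →ₗ[ℝ] EuclideanSpace ℝ (ι × ι) :=
  (WithLp.linearEquiv 2 ℝ (ι × ι → ℝ)).symm.toLinearMap ∘ₗ
    LinearMap.funLeft ℝ ℝ fun p : ι × ι => s(p.1, p.2)

noncomputable def sym2Trace : (Sym2 ι → ℝ) →ₗ[ℝ] ℝ :=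
  ∑ a, LinearMap.proj (Sym2.diag a)

/-- The traceless symmetric matrices, inside `ℝ^(ι × ι)` with the Frobenius inner product. -/
noncomputable def tracelessSymmetric : Submodule ℝ (EuclideanSpace ℝ (ι × ι)) :=
  (LinearMap.ker (sym2Trace ι)).map (sym2ToMatrixVec ι)

theorem finrank_tracelessSymmetric_lt [Nonempty ι] :
    finrank ℝ (tracelessSymmetric ι) < Fintype.card (Sym2 ι) := by
  have hker : LinearMap.ker (sym2Trace ι) ≠ ⊤ := by
    rw [Ne, LinearMap.ker_eq_top]
    intro h
    simpa [sym2Trace] using LinearMap.congr_fun h fun _ => 1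
  calc finrank ℝ (tracelessSymmetric ι)
      ≤ finrank ℝ (LinearMap.ker (sym2Trace ι)) := Submodule.finrank_map_le _ _
    _ < finrank ℝ (Sym2 ι → ℝ) := Submodule.finrank_lt hker
    _ = Fintype.card (Sym2 ι) := Module.finrank_fintype_fun_eq_card ℝ

end TracelessSymmetric

section TracelessOuter

variable {ι : Type*} [Fintype ι]

noncomputable def outerVec (x : EuclideanSpace ℝ ι) : EuclideanSpace ℝ (ι × ι) :=
  WithLp.toLp 2 fun p => x p.1 * x p.2

theorem inner_outerVec (x y : EuclideanSpace ℝ ι) : ⟪outerVec x, outerVec y⟫ = ⟪x, y⟫ ^ 2 := by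
  simp only [outerVec, PiLp.inner_apply, RCLike.inner_apply, conj_trivial, Fintype.sum_prod_type,
    sq, Finset.sum_mul_sum]
  refine Finset.sum_congr rfl fun a _ => Finset.sum_congr rfl fun b _ => ?_
  ring

variable [DecidableEq ι]

variable (ι) in
noncomputable def identityVec : EuclideanSpace ℝ (ι × ι) :=
  WithLp.toLp 2 fun p => if p.1 = p.2 then 1 else 0

noncomputable def tracelessOuter (x : EuclideanSpace ℝ ι) : EuclideanSpace ℝ (ι × ι) :=
  outerVec x - (Fintype.card ι : ℝ)⁻¹ • identityVec ι

theorem inner_outerVec_identityVec (x : EuclideanSpace ℝ ι) :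
    ⟪outerVec x, identityVec ι⟫ = ‖x‖ ^ 2 := by
  rw [← real_inner_self_eq_norm_sq]
  simp only [outerVec, identityVec, PiLp.inner_apply, Fintype.sum_prod_type]
  simp [sq]

theorem inner_identityVec_self : ⟪identityVec ι, identityVec ι⟫ = Fintype.card ι := by
  simp only [identityVec, PiLp.inner_apply, Fintype.sum_prod_type]
  simp

theorem inner_tracelessOuter [Nonempty ι] {x y : EuclideanSpace ℝ ι} (hx : ‖x‖ = 1)
    (hy : ‖y‖ = 1) :
    ⟪tracelessOuter x, tracelessOuter y⟫ = ⟪x, y⟫ ^ 2 - (Fintype.card ι : ℝ)⁻¹ := by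
  have hn : (Fintype.card ι : ℝ) ≠ 0 := Nat.cast_ne_zero.2 Fintype.card_ne_zero
  simp only [tracelessOuter, inner_sub_left, inner_sub_right, inner_smul_left, inner_smul_right,
    real_inner_comm _ (identityVec ι), inner_outerVec, inner_outerVec_identityVec,
    inner_identityVec_self, hx, hy, conj_trivial]
  field_simp
  ring

theorem tracelessOuter_mem_tracelessSymmetric [Nonempty ι] {x : EuclideanSpace ℝ ι}
    (hx : ‖x‖ = 1) : tracelessOuter x ∈ tracelessSymmetric ι := by
  let f : Sym2 ι → ℝ := Sym2.lift
    ⟨fun a b => x a * x b - if a = b then (Fintype.card ι : ℝ)⁻¹ else 0,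
      fun a b => by simp only [mul_comm, eq_comm]⟩
  refine ⟨f, ?_, ?_⟩
  · have hn : (Fintype.card ι : ℝ) ≠ 0 := Nat.cast_ne_zero.2 Fintype.card_ne_zero
    have hx2 : ∑ a, x a * x a = 1 := by
      simpa [sq, hx] using (EuclideanSpace.norm_sq_eq x).symm
    simp [sym2Trace, f, Sym2.diag, Finset.sum_sub_distrib, hx2, hn]
  · ext p
    simp [sym2ToMatrixVec, f, tracelessOuter, outerVec, identityVec]

end TracelessOuter

/-- (Orthoplex bound, real case.) If `φ_1, ..., φ_N` are unit vectors
in `ℝ^M` with `N > M(M+1)/2`, then `max_{j ≠ l} |⟨φ_j, φ_l⟩| ≥ 1/√M`. -/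
theorem orthoplex_bound_real {M N : ℕ} (hN : M * (M + 1) / 2 < N)
    (φ : Fin N → EuclideanSpace ℝ (Fin M))
    (hunit : ∀ j, ‖φ j‖ = 1) :
    ∃ j l, j ≠ l ∧ 1 / Real.sqrt M ≤ |(inner ℝ (φ j) (φ l) : ℝ)| := by
  by_contra! hsmall
  have : Nonempty (Fin M) := by
    by_contra! hempty
    obtain ⟨j⟩ : Nonempty (Fin N) := ⟨⟨0, by omega⟩⟩
    simpa [Subsingleton.elim (φ j) 0] using hunit j
  let T : Fin N → tracelessSymmetric (Fin M) := fun j =>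
    ⟨tracelessOuter (φ j), tracelessOuter_mem_tracelessSymmetric (hunit j)⟩
  have hobtuse : Pairwise fun j l => ⟪T j, T l⟫ < 0 := by
    intro j l hjl
    have hsq := pow_lt_pow_left₀ (hsmall j l hjl) (abs_nonneg _) two_ne_zero
    rw [sq_abs, div_pow, one_pow, Real.sq_sqrt (Nat.cast_nonneg _), one_div] at hsq
    rw [Submodule.coe_inner, inner_tracelessOuter (hunit j) (hunit l), Fintype.card_fin]
    linarith
  have hcard := card_le_finrank_add_one_of_pairwise_inner_neg hobtuse
  have hdim := finrank_tracelessSymmetric_lt (Fin M)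
  rw [Sym2.card, Fintype.card_fin, Nat.choose_two_right, Nat.add_sub_cancel, mul_comm] at hdim
  rw [Fintype.card_fin] at hcard
  omega
end

section
/- With a = √((5+√5)/10), the Tóth-type lower bound for N = 12 vectors in ℂ^2 is attained: (1/2)·csc(12π/(6·10)) = (1/2)·csc(π/5) = √((5+√5)/10) = a. Consequently, any set of 12 unit vectors in ℂ^2 whose coherence equals a achieves the lower bound μ_{12,2}(ℂ) ≥ (1/2)·csc(π/5), so μ_{12,2}(ℂ) = √((5+√5)/10). -/
/-!
The map `u ↦ blochVector u` sends unit vectors of `ℂ²` onto the unit sphere `S² ⊂ ℝ³`, with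
`⟪bu, bv⟫ = 2 |⟨u, v⟩|² - 1`, so a family of unit vectors of `ℂ²` with coherence `< a` would give
twelve points of `S²` with pairwise inner products `< 1/√5`. Delsarte's linear programming bound
rules this out: the polynomial `f(t) = (t + 1)(t + 1/√5)²(t - 1/√5)` is `≤ 0` on `[-1, 1/√5]` and
has nonnegative coefficients in the Legendre basis, and `∑ᵢⱼ Pₖ(⟪xᵢ, xⱼ⟫) ≥ 0` by the addition
theorem for spherical harmonics; for twelve points this forces equality, which the degree one term
then contradicts. Conversely the Bloch preimages of the vertices of the icosahedron, whose distinct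
vertices have inner products `≤ 1/√5`, have coherence `a`.
-/

/-- The coherence of a family of `N` vectors in `ℂ^M`: the supremum of
`|⟨φ_j, φ_l⟩|` over all pairs `j ≠ l`. -/
noncomputable def coherence {M N : ℕ} (φ : Fin N → EuclideanSpace ℂ (Fin M)) : ℝ :=
  ⨆ p : {p : Fin N × Fin N // p.1 ≠ p.2}, ‖(inner ℂ (φ (p : Fin N × Fin N).1) (φ (p : Fin N × Fin N).2) : ℂ)‖

/-- The Grassmannian constant `μ_{N,M}(ℂ)`: the infimum of the coherence over all
families of `N` unit vectors in `ℂ^M`. -/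
noncomputable def grassmannianConst (N M : ℕ) : ℝ :=
  ⨅ φ : {φ : Fin N → EuclideanSpace ℂ (Fin M) // ∀ j, ‖φ j‖ = 1},
    coherence (φ : Fin N → EuclideanSpace ℂ (Fin M))

open Finset Real RealInnerProductSpace ComplexConjugate

lemma real_inner_fin_three (x y : EuclideanSpace ℝ (Fin 3)) :
    ⟪x, y⟫ = x 0 * y 0 + x 1 * y 1 + x 2 * y 2 := by
  simp only [PiLp.inner_apply, RCLike.inner_apply, conj_trivial, Fin.sum_univ_three]
  ring

lemma norm_sq_fin_three (x : EuclideanSpace ℝ (Fin 3)) : ‖x‖ ^ 2 = x 0 ^ 2 + x 1 ^ 2 + x 2 ^ 2 := by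
  simp [EuclideanSpace.norm_sq_eq, Fin.sum_univ_three]

section KernelSums

variable {ι : Type*} [Fintype ι]

lemma sum_sum_eq_sum_add_sum_sum_erase {M : Type*} [AddCommMonoid M] [DecidableEq ι]
    (F : ι → ι → M) : ∑ i, ∑ j, F i j = ∑ i, F i i + ∑ i, ∑ j ∈ univ.erase i, F i j := by
  rw [← sum_add_distrib]
  exact sum_congr rfl fun i _ => (add_sum_erase _ _ (mem_univ i)).symm

lemma sum_sum_nonneg_of_eq_sum_mul_mul {α κ : Type*} [Fintype κ] {K : α → α → ℝ}
    (c : κ → ℝ) (Y : α → κ → ℝ) (hc : ∀ m, 0 ≤ c m)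
    (hK : ∀ x y, K x y = ∑ m, c m * (Y x m * Y y m)) (x : ι → α) :
    0 ≤ ∑ i, ∑ j, K (x i) (x j) := by
  have h : ∑ m, c m * (∑ i, Y (x i) m) ^ 2 = ∑ i, ∑ j, K (x i) (x j) := by
    simp_rw [hK, sq, sum_mul_sum, mul_sum]
    rw [sum_comm]
    exact sum_congr rfl fun i _ => sum_comm
  rw [← h]
  exact sum_nonneg fun m _ => mul_nonneg (hc m) (sq_nonneg _)

lemma sum_sum_real_inner_nonneg {E : Type*} [NormedAddCommGroup E] [InnerProductSpace ℝ E]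
    (x : ι → E) : 0 ≤ ∑ i, ∑ j, ⟪x i, x j⟫ := by
  have h := real_inner_self_nonneg (x := ∑ i, x i)
  simp_rw [sum_inner, inner_sum] at h
  exact h

/- Unnormalised real spherical harmonics of degrees 2, 3 and 4 on `ℝ³`, one for each order `m`.
By the addition theorem the homogenised Legendre kernels `Pₖ(⟪x, y⟫) ‖x‖ᵏ ‖y‖ᵏ` are
nonnegative combinations of the products `Y x m * Y y m`. -/
def sphericalHarmonic₂ (p : EuclideanSpace ℝ (Fin 3)) : Fin 5 → ℝ :=
  let x := p 0; let y := p 1; let z := p 2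
  ![x * y, x * z, y * z, x ^ 2 - y ^ 2, 2 * z ^ 2 - x ^ 2 - y ^ 2]

def sphericalHarmonic₃ (p : EuclideanSpace ℝ (Fin 3)) : Fin 7 → ℝ :=
  let x := p 0; let y := p 1; let z := p 2
  ![z * (2 * z ^ 2 - 3 * x ^ 2 - 3 * y ^ 2), x * (4 * z ^ 2 - x ^ 2 - y ^ 2),
    y * (4 * z ^ 2 - x ^ 2 - y ^ 2), z * (x ^ 2 - y ^ 2), x * y * z, x * (x ^ 2 - 3 * y ^ 2),
    y * (3 * x ^ 2 - y ^ 2)]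

def sphericalHarmonic₄ (p : EuclideanSpace ℝ (Fin 3)) : Fin 9 → ℝ :=
  let x := p 0; let y := p 1; let z := p 2; let r := x ^ 2 + y ^ 2 + z ^ 2
  ![35 * z ^ 4 - 30 * z ^ 2 * r + 3 * r ^ 2, x * z * (7 * z ^ 2 - 3 * r),
    y * z * (7 * z ^ 2 - 3 * r), (x ^ 2 - y ^ 2) * (7 * z ^ 2 - r), x * y * (7 * z ^ 2 - r),
    x * z * (x ^ 2 - 3 * y ^ 2), y * z * (3 * x ^ 2 - y ^ 2), x ^ 4 - 6 * x ^ 2 * y ^ 2 + y ^ 4,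
    x * y * (x ^ 2 - y ^ 2)]

variable (x : ι → EuclideanSpace ℝ (Fin 3))

lemma sum_sum_legendre₂_nonneg :
    0 ≤ ∑ i, ∑ j, (3 * ⟪x i, x j⟫ ^ 2 - ‖x i‖ ^ 2 * ‖x j‖ ^ 2) := by
  refine sum_sum_nonneg_of_eq_sum_mul_mul (K := fun p q => 3 * ⟪p, q⟫ ^ 2 - ‖p‖ ^ 2 * ‖q‖ ^ 2)
    ![6, 6, 6, 3 / 2, 1 / 2] sphericalHarmonic₂ (fun m => by fin_cases m <;> norm_num)
    (fun p q => ?_) x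
  simp only [Fin.sum_univ_succ, Fin.sum_univ_zero, sphericalHarmonic₂, real_inner_fin_three,
    norm_sq_fin_three, Matrix.cons_val_zero, Matrix.cons_val_succ]
  ring

lemma sum_sum_legendre₃_nonneg :
    0 ≤ ∑ i, ∑ j, (5 * ⟪x i, x j⟫ ^ 3 - 3 * ⟪x i, x j⟫ * (‖x i‖ ^ 2 * ‖x j‖ ^ 2)) := by
  refine sum_sum_nonneg_of_eq_sum_mul_mul
    (K := fun p q => 5 * ⟪p, q⟫ ^ 3 - 3 * ⟪p, q⟫ * (‖p‖ ^ 2 * ‖q‖ ^ 2))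
    ![1 / 2, 3 / 4, 3 / 4, 15 / 2, 30, 5 / 4, 5 / 4] sphericalHarmonic₃
    (fun m => by fin_cases m <;> norm_num) (fun p q => ?_) x
  simp only [Fin.sum_univ_succ, Fin.sum_univ_zero, sphericalHarmonic₃, real_inner_fin_three,
    norm_sq_fin_three, Matrix.cons_val_zero, Matrix.cons_val_succ]
  ring

lemma sum_sum_legendre₄_nonneg :
    0 ≤ ∑ i, ∑ j, (35 * ⟪x i, x j⟫ ^ 4 - 30 * ⟪x i, x j⟫ ^ 2 * (‖x i‖ ^ 2 * ‖x j‖ ^ 2)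
      + 3 * (‖x i‖ ^ 2 * ‖x j‖ ^ 2) ^ 2) := by
  refine sum_sum_nonneg_of_eq_sum_mul_mul
    (K := fun p q => 35 * ⟪p, q⟫ ^ 4 - 30 * ⟪p, q⟫ ^ 2 * (‖p‖ ^ 2 * ‖q‖ ^ 2)
      + 3 * (‖p‖ ^ 2 * ‖q‖ ^ 2) ^ 2)
    ![1 / 8, 5, 5, 5 / 2, 10, 35, 35, 35 / 8, 70] sphericalHarmonic₄
    (fun m => by fin_cases m <;> norm_num) (fun p q => ?_) x
  simp only [Fin.sum_univ_succ, Fin.sum_univ_zero, sphericalHarmonic₄, real_inner_fin_three,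
    norm_sq_fin_three, Matrix.cons_val_zero, Matrix.cons_val_succ]
  ring

end KernelSums

lemma sqrt_five_div_five_sq : (√5 / 5) ^ 2 = 1 / 5 := by
  rw [div_pow, sq_sqrt (by norm_num)]
  norm_num

lemma sqrt_five_div_five_mem_Ioo : √5 / 5 ∈ Set.Ioo (2 / 5) 1 := by
  have h₂ : 2 < √5 := lt_sqrt_of_sq_lt (by norm_num)
  have h₅ : √5 < 5 := (sqrt_lt' (by norm_num)).2 (by norm_num)
  constructor <;> linarith

/-- Levenshtein's polynomial for the icosahedron: it vanishes at the inner products `-1, ± 1/√5`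
of its vertices. Its value at `1` is twelve times its constant Legendre coefficient, which is where
the bound `12` comes from. -/
noncomputable def delsartePoly (t : ℝ) : ℝ := (t + 1) * (t + √5 / 5) ^ 2 * (t - √5 / 5)

lemma delsartePoly_nonpos {t : ℝ} (h₁ : -1 ≤ t) (h₂ : t ≤ √5 / 5) : delsartePoly t ≤ 0 :=
  mul_nonpos_of_nonneg_of_nonpos (mul_nonneg (by linarith) (sq_nonneg _)) (by linarith)

lemma le_neg_of_delsartePoly_eq_zero {t : ℝ} (h : delsartePoly t = 0) (ht : t < √5 / 5) :
    t ≤ -(√5 / 5) := by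
  obtain ⟨-, hc⟩ := sqrt_five_div_five_mem_Ioo
  rcases mul_eq_zero.1 h with h | h
  · rcases mul_eq_zero.1 h with h | h
    · linarith
    · linarith [pow_eq_zero_iff two_ne_zero |>.1 h]
  · linarith

lemma delsartePoly_eq_legendre (t : ℝ) :
    delsartePoly t = 1 / 35 * (35 * t ^ 4 - 30 * t ^ 2 + 3)
      + (1 + √5 / 5) / 5 * (5 * t ^ 3 - 3 * t) + (√5 / 5 + 23 / 35) / 3 * (3 * t ^ 2 - 1)
      + 2 * (1 + √5 / 5) / 5 * t
      + 2 * (1 + √5 / 5) / 15 := by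
  unfold delsartePoly
  linear_combination (-t ^ 2 - (1 + √5 / 5) * t - √5 / 5) * sqrt_five_div_five_sq

lemma delsartePoly_one : delsartePoly 1 = 12 * (2 * (1 + √5 / 5) / 15) := by
  unfold delsartePoly
  linear_combination (-2 * (1 + √5 / 5)) * sqrt_five_div_five_sq

section SphericalCodes

variable {ι : Type*} [Fintype ι] {x : ι → EuclideanSpace ℝ (Fin 3)}

lemma sum_sum_delsartePoly_ge (hx : ∀ i, ‖x i‖ = 1) :
    2 * (1 + √5 / 5) / 15 * Fintype.card ι ^ 2 ≤ ∑ i, ∑ j, delsartePoly ⟪x i, x j⟫ := by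
  have h₁ := sum_sum_real_inner_nonneg x
  have h₂ := sum_sum_legendre₂_nonneg x
  have h₃ := sum_sum_legendre₃_nonneg x
  have h₄ := sum_sum_legendre₄_nonneg x
  simp only [hx, one_pow, mul_one] at h₂ h₃ h₄
  simp only [delsartePoly_eq_legendre, sum_add_distrib, ← mul_sum, sum_const, card_univ,
    nsmul_eq_mul] at h₄ ⊢
  linarith [mul_nonneg (by positivity : (0 : ℝ) ≤ (1 + √5 / 5) / 5) h₃,
    mul_nonneg (by positivity : (0 : ℝ) ≤ (√5 / 5 + 23 / 35) / 3) h₂,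
    mul_nonneg (by positivity : (0 : ℝ) ≤ 2 * (1 + √5 / 5) / 5) h₁]

lemma delsartePoly_real_inner_eq_zero [DecidableEq ι] (hx : ∀ i, ‖x i‖ = 1)
    (h : ∀ i j, i ≠ j → ⟪x i, x j⟫ < √5 / 5) (hn : 12 ≤ Fintype.card ι) (i : ι) :
    ∀ j ∈ univ.erase i, delsartePoly ⟪x i, x j⟫ = 0 := by
  have hoff_nonpos (k : ι) : ∀ j ∈ univ.erase k, delsartePoly ⟪x k, x j⟫ ≤ 0 := fun j hj =>
    delsartePoly_nonpos
      (by simpa [hx] using neg_le_of_abs_le (abs_real_inner_le_norm (x k) (x j)))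
      (h k j (ne_of_mem_erase hj).symm).le
  have hoff_nonneg : 0 ≤ ∑ i, ∑ j ∈ univ.erase i, delsartePoly ⟪x i, x j⟫ := by
    have hge := sum_sum_delsartePoly_ge hx
    rw [sum_sum_eq_sum_add_sum_sum_erase] at hge
    simp only [real_inner_self_eq_norm_sq, hx, one_pow, delsartePoly_one, sum_const, card_univ,
      nsmul_eq_mul] at hge
    have hn' : (12 : ℝ) ≤ Fintype.card ι := by exact_mod_cast hn
    have ha₀ : 0 ≤ 2 * (1 + √5 / 5) / 15 := by positivity
    nlinarith [mul_nonneg (mul_nonneg ha₀ (Nat.cast_nonneg (Fintype.card ι))) (sub_nonneg.2 hn')]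
  have hrow := (sum_eq_zero_iff_of_nonpos fun i _ => sum_nonpos (hoff_nonpos i)).1
    (hoff_nonneg.antisymm' (sum_nonpos fun i _ => sum_nonpos (hoff_nonpos i))) i (mem_univ i)
  exact (sum_eq_zero_iff_of_nonpos (hoff_nonpos i)).1 hrow

-- Equality in the linear programming bound leaves only the inner products `-1` and `-1/√5`,
-- and then the degree one sum `‖∑ xᵢ‖²` would be negative.
theorem card_lt_twelve_of_real_inner_lt (hx : ∀ i, ‖x i‖ = 1)
    (h : ∀ i j, i ≠ j → ⟪x i, x j⟫ < √5 / 5) : Fintype.card ι < 12 := by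
  classical
  by_contra! hn
  obtain ⟨hc, -⟩ := sqrt_five_div_five_mem_Ioo
  have hrow (i : ι) : ∑ j ∈ univ.erase i, ⟪x i, x j⟫ ≤ (Fintype.card ι - 1) * -(√5 / 5) := by
    refine (sum_le_sum fun j hj => le_neg_of_delsartePoly_eq_zero
      (delsartePoly_real_inner_eq_zero hx h hn i j hj)
      (h i j (ne_of_mem_erase hj).symm)).trans_eq ?_
    rw [sum_const, card_erase_of_mem (mem_univ i), card_univ, nsmul_eq_mul,
      Nat.cast_sub (by omega), Nat.cast_one]
  have htotal := sum_sum_real_inner_nonneg x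
  rw [sum_sum_eq_sum_add_sum_sum_erase] at htotal
  have hoff := sum_le_sum fun i (_ : i ∈ univ) => hrow i
  simp only [real_inner_self_eq_norm_sq, hx, one_pow, sum_const, card_univ, nsmul_eq_mul,
    mul_one] at htotal hoff
  have hn' : (12 : ℝ) ≤ Fintype.card ι := by exact_mod_cast hn
  have hlarge : 1 < (Fintype.card ι - 1) * (√5 / 5) := by nlinarith
  nlinarith [mul_lt_mul_of_pos_left hlarge (by linarith : (0 : ℝ) < Fintype.card ι)]

end SphericalCodes

noncomputable def blochVector (u : EuclideanSpace ℂ (Fin 2)) : EuclideanSpace ℝ (Fin 3) :=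
  !₂[2 * (u 0 * conj (u 1)).re, 2 * (u 0 * conj (u 1)).im, ‖u 0‖ ^ 2 - ‖u 1‖ ^ 2]

lemma real_inner_blochVector (u v : EuclideanSpace ℂ (Fin 2)) :
    ⟪blochVector u, blochVector v⟫ = 2 * ‖(inner ℂ u v : ℂ)‖ ^ 2 - ‖u‖ ^ 2 * ‖v‖ ^ 2 := by
  have huv : (inner ℂ u v : ℂ) = conj (u 0) * v 0 + conj (u 1) * v 1 := by
    simp only [PiLp.inner_apply, RCLike.inner_apply, Fin.sum_univ_two, mul_comm]
  simp only [real_inner_fin_three, blochVector, huv, EuclideanSpace.norm_sq_eq, Fin.sum_univ_two,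
    Complex.sq_norm, Complex.normSq_apply, Matrix.cons_val_zero, Matrix.cons_val_one,
    Matrix.cons_val, Complex.mul_re, Complex.mul_im, Complex.add_re, Complex.add_im,
    Complex.conj_re, Complex.conj_im]
  ring

lemma norm_blochVector (u : EuclideanSpace ℂ (Fin 2)) : ‖blochVector u‖ = ‖u‖ ^ 2 := by
  have h := real_inner_blochVector u u
  rw [real_inner_self_eq_norm_sq, inner_self_eq_norm_sq_to_K] at h
  simp only [Complex.coe_algebraMap, norm_pow, Complex.norm_real, norm_norm] at h
  rw [← sq_eq_sq₀ (norm_nonneg _) (by positivity)]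
  linear_combination h

lemma blochVector_surjective : Function.Surjective blochVector := by
  intro p
  have hp := norm_sq_fin_three p
  have h₂ : |p 2| ≤ ‖p‖ := by simpa using PiLp.norm_apply_le p 2
  rcases (neg_le_of_abs_le h₂).eq_or_lt with hz | hz
  · have h₀₁ : p 0 ^ 2 + p 1 ^ 2 = 0 := by
      rw [← hz] at hp
      linarith
    have h₀ : p 0 = 0 := by nlinarith [sq_nonneg (p 0), sq_nonneg (p 1)]
    have h₁ : p 1 = 0 := by nlinarith [sq_nonneg (p 0), sq_nonneg (p 1)]
    refine ⟨!₂[0, (√‖p‖ : ℂ)], ?_⟩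
    ext i
    fin_cases i <;> simp [blochVector, h₀, h₁, hz]
  · set w := √((‖p‖ + p 2) / 2)
    have hw : 0 < w := sqrt_pos.2 (by linarith)
    have hw₂ : w ^ 2 = (‖p‖ + p 2) / 2 := sq_sqrt (by linarith)
    refine ⟨!₂[(w : ℂ), ⟨p 0 / (2 * w), -(p 1 / (2 * w))⟩], ?_⟩
    ext i
    fin_cases i <;> simp only [blochVector, Fin.isValue, Fin.zero_eta, Fin.mk_one, Fin.reduceFinMk,
      Matrix.cons_val, Matrix.cons_val_zero, Matrix.cons_val_one, Matrix.cons_val_fin_one,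
      Complex.mul_re, Complex.mul_im, Complex.ofReal_re, Complex.ofReal_im, Complex.conj_re,
      Complex.conj_im, Complex.norm_real, norm_eq_abs, sq_abs, neg_neg, zero_mul, sub_zero,
      add_zero]
    · field_simp
    · field_simp
    · rw [Complex.sq_norm, Complex.normSq_mk, hw₂]
      field_simp
      rw [hw₂]
      linear_combination hp

section Icosahedron

open scoped goldenRatio

noncomputable def icosahedronVertex : Fin 12 → EuclideanSpace ℝ (Fin 3) :=
  ![!₂[0, 1, φ], !₂[0, 1, -φ], !₂[0, -1, φ], !₂[0, -1, -φ],
    !₂[1, φ, 0], !₂[1, -φ, 0], !₂[-1, φ, 0], !₂[-1, -φ, 0],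
    !₂[φ, 0, 1], !₂[φ, 0, -1], !₂[-φ, 0, 1], !₂[-φ, 0, -1]]

lemma real_inner_self_icosahedronVertex (j : Fin 12) :
    ⟪icosahedronVertex j, icosahedronVertex j⟫ = φ + 2 := by
  rw [real_inner_fin_three]
  fin_cases j <;>
    simp only [icosahedronVertex, Fin.isValue, Fin.reduceFinMk, Matrix.cons_val,
      Matrix.cons_val_zero, Matrix.cons_val_one] <;>
    linear_combination goldenRatio_sq

lemma real_inner_icosahedronVertex_le {j l : Fin 12} (h : j ≠ l) :
    ⟪icosahedronVertex j, icosahedronVertex l⟫ ≤ φ := by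
  have := goldenRatio_sq
  have := one_lt_goldenRatio
  rw [real_inner_fin_three]
  fin_cases j <;> fin_cases l <;>
    simp only [icosahedronVertex, Fin.isValue, Fin.reduceFinMk, Matrix.cons_val,
      Matrix.cons_val_zero, Matrix.cons_val_one, ne_eq, not_true_eq_false] at h ⊢ <;>
    nlinarith

noncomputable def icosahedron (j : Fin 12) : EuclideanSpace ℝ (Fin 3) :=
  (√(φ + 2))⁻¹ • icosahedronVertex j

lemma norm_icosahedron (j : Fin 12) : ‖icosahedron j‖ = 1 := by
  have h : ‖icosahedronVertex j‖ = √(φ + 2) := by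
    rw [← real_inner_self_icosahedronVertex, real_inner_self_eq_norm_sq, sqrt_sq (norm_nonneg _)]
  rw [icosahedron, norm_smul, norm_inv, norm_of_nonneg (sqrt_nonneg _), h,
    inv_mul_cancel₀ (sqrt_pos.2 (by positivity)).ne']

lemma real_inner_icosahedron_le {j l : Fin 12} (h : j ≠ l) :
    ⟪icosahedron j, icosahedron l⟫ ≤ √5 / 5 := by
  have hφ : φ / (φ + 2) = √5 / 5 := by
    rw [div_eq_div_iff (by positivity) (by norm_num), goldenRatio]
    linear_combination (-1 / 2 : ℝ) * sq_sqrt (show (0 : ℝ) ≤ 5 by norm_num)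
  rw [icosahedron, icosahedron, real_inner_smul_left, real_inner_smul_right, ← mul_assoc,
    ← mul_inv, mul_self_sqrt (by positivity), ← hφ, inv_mul_eq_div]
  gcongr
  exact real_inner_icosahedronVertex_le h

end Icosahedron

noncomputable def icosaplecticFrame (j : Fin 12) : EuclideanSpace ℂ (Fin 2) :=
  Function.surjInv blochVector_surjective (icosahedron j)

lemma blochVector_icosaplecticFrame (j : Fin 12) :
    blochVector (icosaplecticFrame j) = icosahedron j :=
  Function.surjInv_eq _ _

lemma norm_icosaplecticFrame (j : Fin 12) : ‖icosaplecticFrame j‖ = 1 := by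
  have h := norm_blochVector (icosaplecticFrame j)
  rw [blochVector_icosaplecticFrame, norm_icosahedron] at h
  exact (pow_eq_one_iff_of_nonneg (norm_nonneg _) two_ne_zero).1 h.symm

lemma norm_inner_le_coherence {M N : ℕ} (φ : Fin N → EuclideanSpace ℂ (Fin M)) {j l : Fin N}
    (h : j ≠ l) : ‖(inner ℂ (φ j) (φ l) : ℂ)‖ ≤ coherence φ := by
  unfold coherence
  exact le_ciSup
    (f := fun p : {p : Fin N × Fin N // p.1 ≠ p.2} => ‖(inner ℂ (φ p.1.1) (φ p.1.2) : ℂ)‖)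
    (Set.finite_range _).bddAbove ⟨(j, l), h⟩

lemma coherence_le {M N : ℕ} {φ : Fin N → EuclideanSpace ℂ (Fin M)} {r : ℝ} (hr : 0 ≤ r)
    (h : ∀ j l, j ≠ l → ‖(inner ℂ (φ j) (φ l) : ℂ)‖ ≤ r) : coherence φ ≤ r :=
  Real.iSup_le (fun p => h _ _ p.2) hr

lemma grassmannianConst_le_coherence {M N : ℕ} (φ : Fin N → EuclideanSpace ℂ (Fin M))
    (hφ : ∀ j, ‖φ j‖ = 1) : grassmannianConst N M ≤ coherence φ := by
  unfold grassmannianConst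
  refine ciInf_le ⟨0, ?_⟩ (⟨φ, hφ⟩ : {φ : Fin N → EuclideanSpace ℂ (Fin M) // ∀ j, ‖φ j‖ = 1})
  rintro _ ⟨ψ, rfl⟩
  exact Real.iSup_nonneg fun _ => norm_nonneg _

lemma coherence_icosaplecticFrame_le : coherence icosaplecticFrame ≤ √((5 + √5) / 10) := by
  refine coherence_le (sqrt_nonneg _) fun j l hjl => le_sqrt_of_sq_le ?_
  have h := real_inner_blochVector (icosaplecticFrame j) (icosaplecticFrame l)
  rw [blochVector_icosaplecticFrame, blochVector_icosaplecticFrame, norm_icosaplecticFrame,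
    norm_icosaplecticFrame] at h
  linarith [real_inner_icosahedron_le hjl]

theorem sqrt_le_coherence_of_twelve_le {N : ℕ} (hN : 12 ≤ N)
    (φ : Fin N → EuclideanSpace ℂ (Fin 2)) (hφ : ∀ j, ‖φ j‖ = 1) :
    √((5 + √5) / 10) ≤ coherence φ := by
  by_contra! h
  refine (card_lt_twelve_of_real_inner_lt (x := fun j => blochVector (φ j))
    (fun j => by rw [norm_blochVector, hφ, one_pow]) fun j l hjl => ?_).not_ge (by simpa using hN)
  have hlt := (norm_inner_le_coherence φ hjl).trans_lt h
  rw [lt_sqrt (norm_nonneg _)] at hlt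
  rw [real_inner_blochVector, hφ, hφ]
  linarith

lemma half_inv_sin_pi_div_five : 1 / 2 * (1 / sin (π / 5)) = √((5 + √5) / 10) := by
  have h5 : √5 ^ 2 = 5 := sq_sqrt (by norm_num)
  have hsin : sin (π / 5) ^ 2 = (5 - √5) / 8 := by
    rw [sin_sq, cos_pi_div_five]
    linear_combination (-1 / 16 : ℝ) * h5
  have hpos : 0 < sin (π / 5) := sin_pos_of_pos_of_lt_pi (by positivity) (by linarith [pi_pos])
  have hne : 5 - √5 ≠ 0 := by nlinarith [sqrt_nonneg 5]
  rw [← sqrt_sq (by positivity : 0 ≤ 1 / 2 * (1 / sin (π / 5)))]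
  congr 1
  rw [mul_pow, one_div_pow, one_div_pow, hsin]
  field_simp
  linear_combination 4 * h5

/-- With `a = √((5+√5)/10)`, the Tóth-type lower bound for `N = 12`
vectors in `ℂ²` is attained: `(1/2)csc(12π/(6·10)) = (1/2)csc(π/5) = a`, and the
Grassmannian constant satisfies `μ_{12,2}(ℂ) = √((5+√5)/10)`. -/
theorem grassmannian_const_twelve_two :
    1 / 2 * (1 / Real.sin ((12 : ℝ) * Real.pi / (6 * ((12 : ℝ) - 2))))
      = Real.sqrt ((5 + Real.sqrt 5) / 10) ∧
    1 / 2 * (1 / Real.sin (Real.pi / 5)) = Real.sqrt ((5 + Real.sqrt 5) / 10) ∧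
    grassmannianConst 12 2 = Real.sqrt ((5 + Real.sqrt 5) / 10) := by
  have hangle : (12 : ℝ) * π / (6 * ((12 : ℝ) - 2)) = π / 5 := by ring
  refine ⟨hangle ▸ half_inv_sin_pi_div_five, half_inv_sin_pi_div_five, le_antisymm ?_ ?_⟩
  · exact (grassmannianConst_le_coherence _ norm_icosaplecticFrame).trans
      coherence_icosaplecticFrame_le
  · have : Nonempty {φ : Fin 12 → EuclideanSpace ℂ (Fin 2) // ∀ j, ‖φ j‖ = 1} :=
      ⟨⟨icosaplecticFrame, norm_icosaplecticFrame⟩⟩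
    exact le_ciInf fun φ => sqrt_le_coherence_of_twelve_le le_rfl φ.1 φ.2
end
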